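/- Let s, s' be unit vectors in ℂ^N with γ := ⟨s,s'⟩ real, 0 < γ < 1, δ := √(1−γ²), ρ_± := √((1±δ)/2), u_± := ±(ρ_± s' − ρ_∓ s)/δ, and Δ := |s'⟩⟨s'| − |s⟩⟨s|. Then Δ u_+ = δ u_+ and Δ u_− = −δ u_−. -/

import Mathlib

/-!
On vectors `a • s' - b • s` with real `a, b`, the operator `Δ` acts by
`(a, b) ↦ (a - γ b, γ a - b)`, a real `2 × 2` matrix with eigenvalues `±δ`. Writing
`γ = sin 2φ`, `δ = cos 2φ`, one has `ρ₊ = cos φ` and `ρ₋ = sin φ`, and the eigenvector equations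
reduce to `ρ₊ - γ ρ₋ = δ ρ₊` and `γ ρ₊ - ρ₋ = δ ρ₋`.
-/
open scoped InnerProductSpace

section
variable {𝕜 E : Type*} [RCLike 𝕜] [NormedAddCommGroup E] [InnerProductSpace 𝕜 E]
  [Module ℝ E] [IsScalarTower ℝ 𝕜 E]

theorem dyad_sub_apply_eq_smul {s s' : E} (hs : ‖s‖ = 1) (hs' : ‖s'‖ = 1) {γ : ℝ}
    (hγ : ⟪s, s'⟫_𝕜 = γ) {a b μ : ℝ} (ha : a - b * γ = μ * a) (hb : a * γ - b = μ * b) :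
    ⟪s', a • s' - b • s⟫_𝕜 • s' - ⟪s, a • s' - b • s⟫_𝕜 • s = μ • (a • s' - b • s) := by
  have hs's : ⟪s', s⟫_𝕜 = γ := by rw [← inner_conj_symm, hγ, RCLike.conj_ofReal]
  simp only [RCLike.real_smul_eq_coe_smul (K := 𝕜), inner_sub_right, inner_smul_right,
    inner_self_eq_norm_sq_to_K, hs, hs', hγ, hs's]
  have ha' : (a : 𝕜) - b * γ = μ * a := by exact_mod_cast ha
  have hb' : (a : 𝕜) * γ - b = μ * b := by exact_mod_cast hb
  match_scalars
  · linear_combination ha'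
  · linear_combination -hb'
end

theorem sqrt_half_mul_sqrt_half {γ : ℝ} (h0 : 0 ≤ γ) (h1 : γ ≤ 1) :
    √((1 + √(1 - γ ^ 2)) / 2) * √((1 - √(1 - γ ^ 2)) / 2) = γ / 2 := by
  have hδ : √(1 - γ ^ 2) ^ 2 = 1 - γ ^ 2 := Real.sq_sqrt (by nlinarith)
  rw [← Real.sqrt_mul' _ (by nlinarith [Real.sqrt_nonneg (1 - γ ^ 2)]),
    ← Real.sqrt_sq (by positivity : 0 ≤ γ / 2)]
  congr 1
  linear_combination -hδ / 4

theorem stmt_9 {N : ℕ} (s s' : EuclideanSpace ℂ (Fin N))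
    (hs : ‖s‖ = 1) (hs' : ‖s'‖ = 1) (γ : ℝ)
    (hγ : (inner ℂ s s' : ℂ) = (γ : ℂ)) (h0 : 0 < γ) (h1 : γ < 1)
    (δ ρp ρm : ℝ) (hδ : δ = Real.sqrt (1 - γ ^ 2))
    (hρp : ρp = Real.sqrt ((1 + δ) / 2)) (hρm : ρm = Real.sqrt ((1 - δ) / 2))
    (up um : EuclideanSpace ℂ (Fin N))
    (hup : up = δ⁻¹ • (ρp • s' - ρm • s))
    (hum : um = -(δ⁻¹ • (ρm • s' - ρp • s))) :
    (inner ℂ s' up : ℂ) • s' - (inner ℂ s up : ℂ) • s = δ • up ∧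
    (inner ℂ s' um : ℂ) • s' - (inner ℂ s um : ℂ) • s = (-δ) • um := by
  have hpm : ρp * ρm = γ / 2 := by
    rw [hρp, hρm, hδ]; exact sqrt_half_mul_sqrt_half h0.le h1.le
  have hδ0 : 0 ≤ δ := hδ ▸ Real.sqrt_nonneg _
  have hδ1 : δ ≤ 1 := by rw [hδ, Real.sqrt_le_one]; nlinarith
  have hp2 : ρp ^ 2 = (1 + δ) / 2 := by rw [hρp]; exact Real.sq_sqrt (by linarith)
  have hm2 : ρm ^ 2 = (1 - δ) / 2 := by rw [hρm]; exact Real.sq_sqrt (by linarith)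
  have hA : ρp - ρm * γ = δ * ρp := by linear_combination 2 * ρm * hpm - 2 * ρp * hm2
  have hB : ρp * γ - ρm = δ * ρm := by linear_combination 2 * ρm * hp2 - 2 * ρp * hpm
  rw [show up = (δ⁻¹ * ρp) • s' - (δ⁻¹ * ρm) • s by rw [hup]; module,
    show um = (-δ⁻¹ * ρm) • s' - (-δ⁻¹ * ρp) • s by rw [hum]; module]
  constructor <;> apply dyad_sub_apply_eq_smul hs hs' hγ
  · linear_combination δ⁻¹ * hA
  · linear_combination δ⁻¹ * hB
  · linear_combination δ⁻¹ * hB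
  · linear_combination δ⁻¹ * hA
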